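/- For integers k ≥ 3 and f ≥ 1, consider ((k-1)f+1)^2 edges distributed from a set S of (k-1)f+1 round-2 vertices to kf+1 round-1 vertices, where each round-1 vertex receives at most (k-1)f+1 edges. Then at least (k-2)f+1 of the round-1 vertices receive at least f+1 edges. -/
import Mathlib


/-- Tusk's liveness counting lemma: ((k-1)f+1)^2 edges are distributed to the
kf+1 round-1 vertices, each receiving at most (k-1)f+1 edges; then at least
(k-2)f+1 round-1 vertices receive at least f+1 edges. -/
theorem tusk_liveness_counting (k f : ℕ) (hk : 3 ≤ k) (hf : 1 ≤ f)
    (V : Finset ℕ) (hV : V.card = k * f + 1) (c : ℕ → ℕ)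
    (hsum : ∑ v ∈ V, c v = ((k - 1) * f + 1) ^ 2)
    (hmax : ∀ v ∈ V, c v ≤ (k - 1) * f + 1) :
    (k - 2) * f + 1 ≤ (V.filter (fun v => f + 1 ≤ c v)).card := by
  obtain ⟨m, rfl⟩ : ∃ m, k = m + 3 := ⟨k - 3, by omega⟩
  have h1 : m + 3 - 1 = m + 2 := rfl
  have h2 : m + 3 - 2 = m + 1 := rfl
  rw [h1] at hsum hmax
  rw [h2]
  set A := V.filter (fun v => f + 1 ≤ c v) with hA
  set B := V.filter (fun v => ¬ f + 1 ≤ c v) with hB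
  have hcards : A.card + B.card = (m + 3) * f + 1 := by
    rw [hA, hB, Finset.card_filter_add_card_filter_not, hV]
  have hsplit : ∑ v ∈ A, c v + ∑ v ∈ B, c v = ((m + 2) * f + 1) ^ 2 := by
    rw [hA, hB, Finset.sum_filter_add_sum_filter_not, hsum]
  have hbA : ∑ v ∈ A, c v ≤ A.card * ((m + 2) * f + 1) := by
    apply Finset.sum_le_card_nsmul
    intro v hv
    exact hmax v (Finset.mem_filter.mp hv).1
  have hbB : ∑ v ∈ B, c v ≤ B.card * f := by
    apply Finset.sum_le_card_nsmul
    intro v hv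
    have := (Finset.mem_filter.mp hv).2
    omega
  by_contra h
  push_neg at h
  have ha : A.card ≤ (m + 1) * f := Nat.lt_succ_iff.mp h
  have key : ((m + 2) * f + 1) ^ 2 ≤ A.card * ((m + 2) * f + 1) + B.card * f := by
    calc ((m + 2) * f + 1) ^ 2 = ∑ v ∈ A, c v + ∑ v ∈ B, c v := hsplit.symm
      _ ≤ A.card * ((m + 2) * f + 1) + B.card * f := add_le_add hbA hbB
  have hm' : A.card * f + B.card * f = ((m + 3) * f + 1) * f := by
    rw [← Nat.add_mul, hcards]
  nlinarith [key, hm', Nat.mul_le_mul_right ((m + 1) * f + 1) ha, hf,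
    Nat.zero_le (m * f * f), Nat.zero_le (m * f)]
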